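/- Under the su(N) generator hypotheses, the Dirac matrices in the Dirac representation, and the Grassmann setup, the cyclically contracted triple-tensor sixth-order combinations vanish: Σ_{i₁,i₂,i₃ ∈ Fin N} Σ_{κ,λ,μ ∈ Fin 4} ε κ · ε λ · ε μ • B (σ κ λ) i₁ i₁ * B (σ λ μ) i₂ i₃ * B (σ μ κ) i₃ i₂ = 0, and likewise Σ_{i₁,i₂,i₃ ∈ Fin N} Σ_{κ,λ,μ ∈ Fin 4} ε κ · ε λ · ε μ • B (σ κ λ) i₁ i₂ * B (σ λ μ) i₂ i₁ * B (σ μ κ) i₃ i₃ = 0. (In physics notation: ψ̄_{i₁} σ_κ{}^λ ψ_{i₁} · ψ̄_{i₂} σ_λ{}^μ ψ_{i₃} · ψ̄_{i₃} σ_μ{}^κ ψ_{i₂} = 0 and its reordering.) -/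

import Mathlib

noncomputable section

open Complex Matrix

/-- The Dirac γ-matrices in the Dirac representation. -/
def γm : Fin 4 → Matrix (Fin 4) (Fin 4) ℂ :=
  ![!![1,0,0,0; 0,1,0,0; 0,0,-1,0; 0,0,0,-1],
    !![0,0,0,1; 0,0,1,0; 0,-1,0,0; -1,0,0,0],
    !![0,0,0,-I; 0,0,I,0; 0,I,0,0; -I,0,0,0],
    !![0,0,1,0; 0,0,0,-1; -1,0,0,0; 0,1,0,0]]

/-- γ⁵ = i·γ⁰γ¹γ²γ³. -/
def γ5 : Matrix (Fin 4) (Fin 4) ℂ := I • (γm 0 * γm 1 * γm 2 * γm 3)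

/-- σ^{μν} = (i/2)[γ^μ, γ^ν]. -/
def σm (μ ν : Fin 4) : Matrix (Fin 4) (Fin 4) ℂ := (I / 2) • (γm μ * γm ν - γm ν * γm μ)

/-- The metric signs ε 0 = 1, ε 1 = ε 2 = ε 3 = −1 used to raise/lower indices. -/
def εs : Fin 4 → ℤ := ![1, -1, -1, -1]

/-- The totally antisymmetric Levi-Civita symbol on four indices,
normalized by ε₄ 0 1 2 3 = 1. -/
def ε4 (κ l μ ν : Fin 4) : ℤ :=
  Matrix.det (Matrix.of fun p q : Fin 4 => if ![κ, l, μ, ν] p = q then (1 : ℤ) else 0)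

/-- The Grassmann algebra generated by the 8N fermion components:
the exterior algebra of the direct sum of two copies of (Fin 4 × Fin N) → ℂ. -/
abbrev GrassAlg (N : ℕ) :=
  ExteriorAlgebra ℂ (((Fin 4 × Fin N) → ℂ) × ((Fin 4 × Fin N) → ℂ))

/-- ψ (A, i): the image in the Grassmann algebra of the standard basis vector
of the first summand indexed by (A, i). -/
def ψv (N : ℕ) (A : Fin 4) (i : Fin N) : GrassAlg N :=
  ExteriorAlgebra.ι ℂ (Pi.single (A, i) 1, 0)

/-- ψ̄ (A, i): the image in the Grassmann algebra of the standard basis vector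
of the second summand indexed by (A, i). -/
def ψbar (N : ℕ) (A : Fin 4) (i : Fin N) : GrassAlg N :=
  ExteriorAlgebra.ι ℂ (0, Pi.single (A, i) 1)

/-- The fermion bilinear B Γ i j = ∑_{A,B} Γ A B · ψ̄ (A,i) ψ (B,j). -/
def Bgr (N : ℕ) (Γ : Matrix (Fin 4) (Fin 4) ℂ) (i j : Fin N) : GrassAlg N :=
  ∑ A : Fin 4, ∑ B : Fin 4, Γ A B • (ψbar N A i * ψv N B j)

/-- ⟪Γ, X⟫ = ∑_{i,j} X i j · B Γ i j, the bilinear with Dirac structure Γ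
and color structure X. -/
def pairing (N : ℕ) (Γ : Matrix (Fin 4) (Fin 4) ℂ)
    (X : Matrix (Fin N) (Fin N) ℂ) : GrassAlg N :=
  ∑ i : Fin N, ∑ j : Fin N, X i j • Bgr N Γ i j

/-- ⟪Γ⟫ = ⟪Γ, 1⟫, the color-singlet bilinear. -/
def sing (N : ℕ) (Γ : Matrix (Fin 4) (Fin 4) ℂ) : GrassAlg N := pairing N Γ 1


/-!
The Lorentz contraction `X_κ^λ Y_λ^μ Z_μ^κ` of three antisymmetric tensors with mutually
commuting entries changes sign when two of them are exchanged: relabel the two summation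
indices they share, and pay one sign for each of the three transposed tensors. The σ-bilinears
are antisymmetric (as σ^{κλ} is) and commute (they are even in the Grassmann algebra). Hence
each of the two sums is odd under exchanging the colour indices of two of its factors, so it
vanishes.
-/

lemma Commute.mul_left_of_anticomm {A : Type*} [Ring A] {a b y : A}
    (ha : a * y = -(y * a)) (hb : b * y = -(y * b)) : Commute (a * b) y := by
  calc a * b * y = -(a * y * b) := by rw [mul_assoc, hb, mul_neg, ← mul_assoc]
    _ = y * (a * b) := by rw [ha, neg_mul, neg_neg, mul_assoc]

lemma ExteriorAlgebra.ι_mul_ι_anticomm {R M : Type*} [CommRing R] [AddCommGroup M] [Module R M]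
    (x y : M) : ι R x * ι R y = -(ι R y * ι R x) :=
  eq_neg_of_add_eq_zero_left (ι_add_mul_swap x y)

lemma ExteriorAlgebra.commute_ι_mul_ι {R M : Type*} [CommRing R] [AddCommGroup M] [Module R M]
    (x y z w : M) : Commute (ι R x * ι R y) (ι R z * ι R w) :=
  .mul_right (.mul_left_of_anticomm (ι_mul_ι_anticomm _ _) (ι_mul_ι_anticomm _ _))
    (.mul_left_of_anticomm (ι_mul_ι_anticomm _ _) (ι_mul_ι_anticomm _ _))

lemma Bgr_commute (N : ℕ) (Γ Γ' : Matrix (Fin 4) (Fin 4) ℂ) (i j k l : Fin N) :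
    Commute (Bgr N Γ i j) (Bgr N Γ' k l) :=
  .sum_left _ _ _ fun _ _ => .sum_left _ _ _ fun _ _ =>
    .sum_right _ _ _ fun _ _ => .sum_right _ _ _ fun _ _ =>
      ((ExteriorAlgebra.commute_ι_mul_ι _ _ _ _).smul_left _).smul_right _

lemma Bgr_neg (N : ℕ) (Γ : Matrix (Fin 4) (Fin 4) ℂ) (i j : Fin N) :
    Bgr N (-Γ) i j = -Bgr N Γ i j := by
  simp only [Bgr, Matrix.neg_apply, neg_smul, Finset.sum_neg_distrib]

lemma σm_antisymm (μ ν : Fin 4) : σm ν μ = -σm μ ν := by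
  rw [σm, σm, ← smul_neg, neg_sub]

lemma Finset.sum_sum_eq_zero_of_antisymm {α M : Type*} [Fintype α] [AddCommGroup M]
    [IsAddTorsionFree M] (f : α → α → M) (hf : ∀ a b, f b a = -f a b) :
    ∑ a, ∑ b, f a b = 0 :=
  self_eq_neg.mp <| by
    simp only [← sum_neg_distrib, ← hf]
    exact sum_comm

lemma Finset.sum_sum_sum_rev {α M : Type*} [Fintype α] [AddCommMonoid M] (f : α → α → α → M) :
    ∑ a, ∑ b, ∑ c, f c b a = ∑ a, ∑ b, ∑ c, f a b c := by
  rw [sum_comm]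
  exact (sum_congr rfl fun _ _ => sum_comm).trans sum_comm

section LorentzContraction

variable {ι R A : Type*} [Fintype ι] [CommRing R] [Ring A] [Algebra R A]

/-- `X_κ^λ Y_λ^μ Z_μ^κ`, the indices raised with the metric signs `g`. -/
def lorentzTrace (g : ι → R) (X Y Z : ι → ι → A) : A :=
  ∑ κ, ∑ l, ∑ μ, (g κ * g l * g μ) • (X κ l * Y l μ * Z μ κ)

variable {g : ι → R} {X Y Z : ι → ι → A}

lemma lorentzTrace_swap_right (hX : ∀ a b, X b a = -X a b) (hY : ∀ a b, Y b a = -Y a b)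
    (hZ : ∀ a b, Z b a = -Z a b) (hYZ : ∀ a b c d, Commute (Y a b) (Z c d)) :
    lorentzTrace g X Z Y = -lorentzTrace g X Y Z := by
  unfold lorentzTrace
  rw [Finset.sum_comm]
  simp only [← Finset.sum_neg_distrib]
  refine Finset.sum_congr rfl fun l _ => Finset.sum_congr rfl fun κ _ =>
    Finset.sum_congr rfl fun μ _ => ?_
  rw [hX, hY, hZ, mul_assoc (-X l κ), neg_mul_neg, ← (hYZ κ μ μ l).eq, mul_comm (g κ) (g l),
    neg_mul, smul_neg, ← mul_assoc (X l κ)]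

lemma lorentzTrace_swap_left (hX : ∀ a b, X b a = -X a b) (hY : ∀ a b, Y b a = -Y a b)
    (hZ : ∀ a b, Z b a = -Z a b) (hXY : ∀ a b c d, Commute (X a b) (Y c d)) :
    lorentzTrace g Y X Z = -lorentzTrace g X Y Z := by
  calc lorentzTrace g Y X Z
      = ∑ κ, ∑ l, ∑ μ, -((g μ * g l * g κ) • (X μ l * Y l κ * Z κ μ)) := by
        refine Finset.sum_congr rfl fun κ _ => Finset.sum_congr rfl fun l _ =>
          Finset.sum_congr rfl fun μ _ => ?_
        rw [hX, hY, hZ, neg_mul_neg, (hXY μ l l κ).eq, mul_neg, smul_neg]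
        congr 2
        ring
    _ = -lorentzTrace g X Y Z := by
        simp only [Finset.sum_neg_distrib, lorentzTrace]
        exact congrArg Neg.neg (Finset.sum_sum_sum_rev _)

end LorentzContraction

def sigmaBilinear (N : ℕ) (i j : Fin N) (κ l : Fin 4) : GrassAlg N := Bgr N (σm κ l) i j

lemma sigmaBilinear_antisymm (N : ℕ) (i j : Fin N) (κ l : Fin 4) :
    sigmaBilinear N i j l κ = -sigmaBilinear N i j κ l := by
  rw [sigmaBilinear, sigmaBilinear, σm_antisymm, Bgr_neg]

lemma sigmaBilinear_commute (N : ℕ) (i j k l : Fin N) (κ κ' μ μ' : Fin 4) :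
    Commute (sigmaBilinear N i j κ κ') (sigmaBilinear N k l μ μ') :=
  Bgr_commute N _ _ i j k l

theorem sigma_cyclic_vanish_general (N : ℕ) :
    (∑ i₁ : Fin N, ∑ i₂ : Fin N, ∑ i₃ : Fin N, ∑ κ : Fin 4, ∑ lam : Fin 4, ∑ μ : Fin 4,
        ((εs κ : ℂ) * (εs lam : ℂ) * (εs μ : ℂ)) •
          (Bgr N (σm κ lam) i₁ i₁ * Bgr N (σm lam μ) i₂ i₃ * Bgr N (σm μ κ) i₃ i₂) = 0) ∧
    (∑ i₁ : Fin N, ∑ i₂ : Fin N, ∑ i₃ : Fin N, ∑ κ : Fin 4, ∑ lam : Fin 4, ∑ μ : Fin 4,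
        ((εs κ : ℂ) * (εs lam : ℂ) * (εs μ : ℂ)) •
          (Bgr N (σm κ lam) i₁ i₂ * Bgr N (σm lam μ) i₂ i₁ * Bgr N (σm μ κ) i₃ i₃) = 0) := by
  have : IsAddTorsionFree (GrassAlg N) := .of_isTorsionFree ℂ _
  let ε : Fin 4 → ℂ := fun κ => εs κ
  have hanti := sigmaBilinear_antisymm N
  have hcomm := sigmaBilinear_commute N
  constructor
  · refine Finset.sum_eq_zero fun i₁ _ => Finset.sum_sum_eq_zero_of_antisymm
      (fun i₂ i₃ => lorentzTrace ε (sigmaBilinear N i₁ i₁) (sigmaBilinear N i₂ i₃)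
        (sigmaBilinear N i₃ i₂)) fun i₂ i₃ =>
      lorentzTrace_swap_right (hanti _ _) (hanti _ _) (hanti _ _) (hcomm _ _ _ _)
  · refine Finset.sum_sum_eq_zero_of_antisymm
      (fun i₁ i₂ => ∑ i₃, lorentzTrace ε (sigmaBilinear N i₁ i₂) (sigmaBilinear N i₂ i₁)
        (sigmaBilinear N i₃ i₃)) fun i₁ i₂ => ?_
    rw [← Finset.sum_neg_distrib]
    exact Finset.sum_congr rfl fun i₃ _ =>
      lorentzTrace_swap_left (hanti _ _) (hanti _ _) (hanti _ _) (hcomm _ _ _ _)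

/-- **Vanishing of the cyclically contracted triple-tensor combinations.** -/
theorem sigma_cyclic_vanish (N : ℕ) (hN : 2 ≤ N)
    (T : Fin (N ^ 2 - 1) → Matrix (Fin N) (Fin N) ℂ)
    (htr : ∀ a, (T a).trace = 0)
    (hherm : ∀ a, (T a)ᴴ = T a)
    (horth : ∀ a b, (T a * T b).trace = if a = b then (1 / 2 : ℂ) else 0) :
    (∑ i₁ : Fin N, ∑ i₂ : Fin N, ∑ i₃ : Fin N, ∑ κ : Fin 4, ∑ lam : Fin 4, ∑ μ : Fin 4,
        ((εs κ : ℂ) * (εs lam : ℂ) * (εs μ : ℂ)) •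
          (Bgr N (σm κ lam) i₁ i₁ * Bgr N (σm lam μ) i₂ i₃ * Bgr N (σm μ κ) i₃ i₂) = 0) ∧
    (∑ i₁ : Fin N, ∑ i₂ : Fin N, ∑ i₃ : Fin N, ∑ κ : Fin 4, ∑ lam : Fin 4, ∑ μ : Fin 4,
        ((εs κ : ℂ) * (εs lam : ℂ) * (εs μ : ℂ)) •
          (Bgr N (σm κ lam) i₁ i₂ * Bgr N (σm lam μ) i₂ i₁ * Bgr N (σm μ κ) i₃ i₃) = 0) :=
  sigma_cyclic_vanish_general N
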